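/- Let (G, <) be an ordered group, let x, y ∈ G with y ≠ 1, and let k, l ∈ ℤ with k ≠ l. If x⁻¹·y^k·x = y^l, then y ≪ x. -/

import Mathlib

/-- The absolute value `|g| = max(g, g⁻¹)` in a linearly ordered group. -/
def gabs {G : Type*} [Group G] [LinearOrder G] (g : G) : G := max g g⁻¹

/-- `g` and `h` are Archimedean equivalent: `|g| < |h|^m` and `|h| < |g|^n`
for some positive integers `m, n`. -/
def ArchEquiv {G : Type*} [Group G] [LinearOrder G] (g h : G) : Prop :=
  ∃ m n : ℕ, 0 < m ∧ 0 < n ∧ gabs g < gabs h ^ m ∧ gabs h < gabs g ^ n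

/-- `g` is Archimedean less than `h`: `|g|^n < |h|` for every positive integer `n`. -/
def ArchLT {G : Type*} [Group G] [LinearOrder G] (g h : G) : Prop :=
  ∀ n : ℕ, 0 < n → gabs g ^ n < gabs h

/-!
Conjugation by `x` is an order automorphism, so it commutes with `|·|ₘ`. Iterating the relation
gives `x⁻ᵐ y^(kᵐ) xᵐ = y^(lᵐ)`, hence `|y|ₘ^(|l|ᵐ) = x⁻ᵐ |y|ₘ^(|k|ᵐ) xᵐ`. If `|x|ₘ ≤ |y|ₘⁿ`, the
right-hand side is at most `|y|ₘ^(2nm + |k|ᵐ)`, and for `|k| < |l|` the exponent `|l|ᵐ` eventually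
exceeds `2nm + |k|ᵐ`. The case `|l| < |k|` follows by replacing `x` with `x⁻¹`, and `|k| = |l|` is
impossible because conjugation preserves the sign of `y^k` in a bi-ordered group.
-/

open Filter Asymptotics

theorem exists_mul_add_pow_lt_pow (c : ℕ) {K L : ℕ} (hKL : K < L) (hL : 1 < L) :
    ∃ m : ℕ, c * m + K ^ m < L ^ m := by
  have hlin : (fun m : ℕ => (c : ℝ) * m) =o[atTop] fun m => (L : ℝ) ^ m :=
    (isLittleO_coe_const_pow_of_one_lt (R := ℝ) (Nat.one_lt_cast.2 hL)).const_mul_left _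
  have hexp : (fun m : ℕ => (K : ℝ) ^ m) =o[atTop] fun m => (L : ℝ) ^ m :=
    isLittleO_pow_pow_of_lt_left K.cast_nonneg (Nat.cast_lt.2 hKL)
  obtain ⟨m, hm⟩ := ((hlin.add hexp).def one_half_pos).exists
  have hLm : (0 : ℝ) < (L : ℝ) ^ m := by positivity
  rw [Real.norm_of_nonneg (by positivity), Real.norm_of_nonneg hLm.le] at hm
  refine ⟨m, ?_⟩
  have : ((c * m + K ^ m : ℕ) : ℝ) < (L ^ m : ℕ) := by push_cast; linarith
  exact_mod_cast this

theorem conj_pow_zpow_pow {G : Type*} [Group G] {x y : G} {k l : ℤ}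
    (h : x⁻¹ * y ^ k * x = y ^ l) (m : ℕ) : (x ^ m)⁻¹ * y ^ (k ^ m) * x ^ m = y ^ (l ^ m) := by
  have conj_zpow' (a b : G) (i : ℤ) : a⁻¹ * b ^ i * a = (a⁻¹ * b * a) ^ i := by
    simpa using (conj_zpow (a := a⁻¹) (b := b) (i := i)).symm
  induction m with
  | zero => simp
  | succ m ih =>
    calc (x ^ (m + 1))⁻¹ * y ^ (k ^ (m + 1)) * x ^ (m + 1)
        = x⁻¹ * ((x ^ m)⁻¹ * (y ^ (k ^ m)) ^ k * x ^ m) * x := by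
          simp only [pow_succ, zpow_mul, mul_inv_rev, mul_assoc]
      _ = x⁻¹ * (y ^ k) ^ (l ^ m) * x := by
          rw [conj_zpow', ih, ← zpow_mul, ← zpow_mul, mul_comm]
      _ = y ^ (l ^ (m + 1)) := by rw [conj_zpow', h, ← zpow_mul, pow_succ, mul_comm]

section OrderedGroup

variable {G : Type*} [Group G] [LinearOrder G]

theorem gabs_eq_mabs (g : G) : gabs g = |g|ₘ := rfl

theorem archLT_inv_right {g h : G} : ArchLT g h⁻¹ ↔ ArchLT g h := by
  simp only [ArchLT, gabs_eq_mabs, mabs_inv]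

variable [MulLeftMono G]

-- Mathlib's `mabs_pow` is stated for commutative groups only.
theorem mabs_pow' (g : G) (n : ℕ) : |g ^ n|ₘ = |g|ₘ ^ n := by
  rcases le_total 1 g with hg | hg
  · rw [mabs_of_one_le hg, mabs_of_one_le (one_le_pow_of_one_le' hg n)]
  · rw [mabs_of_le_one hg, mabs_of_le_one (pow_le_one' hg n), inv_pow]

theorem mabs_zpow' (g : G) (j : ℤ) : |g ^ j|ₘ = |g|ₘ ^ j.natAbs := by
  rcases Int.natAbs_eq j with hj | hj <;> rw [hj]
  · rw [zpow_natCast, mabs_pow', Int.natAbs_natCast]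
  · rw [zpow_neg, zpow_natCast, mabs_inv, mabs_pow', Int.natAbs_neg, Int.natAbs_natCast]

variable [MulRightMono G]

theorem conj_strictMono (x : G) : StrictMono fun g => x⁻¹ * g * x :=
  fun _ _ h => mul_lt_mul_left (mul_lt_mul_right h _) _

theorem mabs_conj (x g : G) : |x⁻¹ * g * x|ₘ = x⁻¹ * |g|ₘ * x := by
  simp only [mabs, (conj_strictMono x).monotone.map_sup, mul_inv_rev, inv_inv, mul_assoc]

theorem one_lt_conj_iff {x g : G} : 1 < x⁻¹ * g * x ↔ 1 < g := by
  simpa using (conj_strictMono x).lt_iff_lt (a := 1) (b := g)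

theorem eq_one_of_conj_eq_inv {x g : G} (h : x⁻¹ * g * x = g⁻¹) : g = 1 := by
  have not_one_lt (b : G) (hb : x⁻¹ * b * x = b⁻¹) : b ≤ 1 :=
    not_lt.1 fun h1 => (one_lt_inv'.1 (hb ▸ one_lt_conj_iff.2 h1)).asymm h1
  have h' : x⁻¹ * g⁻¹ * x = g⁻¹⁻¹ := by simpa [mul_assoc] using congrArg (·⁻¹) h
  exact le_antisymm (not_one_lt g h) (inv_le_one'.1 (not_one_lt g⁻¹ h'))

theorem natAbs_ne_natAbs_of_conj_zpow {x y : G} (hy : y ≠ 1) {k l : ℤ} (hkl : k ≠ l)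
    (hconj : x⁻¹ * y ^ k * x = y ^ l) : k.natAbs ≠ l.natAbs := by
  intro habs
  have hlk : l = -k := by
    rcases Int.natAbs_eq_natAbs_iff.1 habs with h | h <;> omega
  have hk : y ^ k = 1 := eq_one_of_conj_eq_inv (by rw [hconj, hlk, zpow_neg])
  have hk0 : k = 0 := (IsMulTorsionFree.zpow_eq_one_iff_right hy).1 hk
  omega

theorem archLT_of_conj_zpow_of_natAbs_lt {x y : G} (hy : y ≠ 1) {k l : ℤ}
    (hkl : k.natAbs < l.natAbs) (hconj : x⁻¹ * y ^ k * x = y ^ l) : ArchLT y x := by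
  have hk : k ≠ 0 := by
    rintro rfl
    have hl : y ^ l = 1 := by simpa using hconj.symm
    rw [IsMulTorsionFree.zpow_eq_one_iff_right hy] at hl
    omega
  intro n _
  rw [gabs_eq_mabs, gabs_eq_mabs]
  by_contra! hx
  set a := |y|ₘ
  obtain ⟨m, hm⟩ := exists_mul_add_pow_lt_pow (2 * n) hkl (by omega)
  have hxm : |x ^ m|ₘ ≤ a ^ (n * m) := by
    rw [mabs_pow', pow_mul]
    exact pow_le_pow_left' hx m
  have hpow : a ^ l.natAbs ^ m ≤ a ^ (2 * n * m + k.natAbs ^ m) :=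
    calc a ^ l.natAbs ^ m = |y ^ l ^ m|ₘ := by rw [mabs_zpow', Int.natAbs_pow]
      _ = (x ^ m)⁻¹ * a ^ k.natAbs ^ m * x ^ m := by
        rw [← conj_pow_zpow_pow hconj, mabs_conj, mabs_zpow', Int.natAbs_pow]
      _ ≤ a ^ (n * m) * a ^ k.natAbs ^ m * a ^ (n * m) :=
        mul_le_mul' (mul_le_mul' ((inv_le_mabs _).trans hxm) le_rfl) ((le_mabs_self _).trans hxm)
      _ = a ^ (2 * n * m + k.natAbs ^ m) := by rw [← pow_add, ← pow_add]; ring_nf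
  exact hm.not_ge ((pow_le_pow_iff_right' (one_lt_mabs.2 hy)).1 hpow)

end OrderedGroup

/-- In an ordered group, if `x⁻¹ y^k x = y^l` with `k ≠ l` and `y ≠ 1`, then `y ≪ x`. -/
theorem archLT_of_conj_zpow {G : Type*} [Group G] [LinearOrder G]
    (hl : ∀ a b c : G, a < b → c * a < c * b)
    (hr : ∀ a b c : G, a < b → a * c < b * c)
    (x y : G) (hy : y ≠ 1) (k l : ℤ) (hkl : k ≠ l)
    (hconj : x⁻¹ * y ^ k * x = y ^ l) :
    ArchLT y x := by
  have : MulLeftStrictMono G := ⟨fun c _ _ h => hl _ _ c h⟩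
  have : MulRightStrictMono G := ⟨fun c _ _ h => hr _ _ c h⟩
  have := mulLeftMono_of_mulLeftStrictMono G
  have := mulRightMono_of_mulRightStrictMono G
  rcases (natAbs_ne_natAbs_of_conj_zpow hy hkl hconj).lt_or_gt with hlt | hgt
  · exact archLT_of_conj_zpow_of_natAbs_lt hy hlt hconj
  · have hconj' : x⁻¹⁻¹ * y ^ l * x⁻¹ = y ^ k := by rw [← hconj]; group
    exact archLT_inv_right.1 (archLT_of_conj_zpow_of_natAbs_lt hy hgt hconj')
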